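/- (Countermodel from a happy sequent) For every happy sequent G, the model M(G) = ⟨labels of G, R_G, ≤_G, V⟩, where a ∈ V(w) iff w:a occurs on the left of G, is a birelational model in which R_G is reflexive and transitive, and it satisfies: for every label x and formula A, if x:A occurs on the left of G then M(G),x ⊩ A, and if x:A occurs on the right of G then M(G),x ⊮ A. -/
import Mathlib


/-- Formulas of intuitionistic modal logic, built from atomic propositions
`a ∈ ℕ` by `A ::= ⊥ | a | (A∧A) | (A∨A) | (A⊃A) | □A | ◇A`. -/
inductive Formula : Type
  | bot  : Formula
  | atom : ℕ → Formula
  | and  : Formula → Formula → Formula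
  | or   : Formula → Formula → Formula
  | imp  : Formula → Formula → Formula
  | box  : Formula → Formula
  | dia  : Formula → Formula
  deriving DecidableEq
/-- A labelled sequent `G = (R, Γ ⟹ Δ)`: relational atoms `x ≤ y` (`le`) and
`x R y` (`rel`) over labels (natural numbers) together with the labelled formulas
occurring on the left (`Γ`) and on the right (`Δ`) of the sequent arrow. -/
structure LSeq : Type where
  le : Set (ℕ × ℕ)
  rel : Set (ℕ × ℕ)
  left : Set (ℕ × Formula)
  right : Set (ℕ × Formula)
namespace LSeq

/-- `x ≤_G y`. -/
def Le (G : LSeq) (x y : ℕ) : Prop := (x, y) ∈ G.le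
/-- `x R_G y`. -/
def Rel (G : LSeq) (x y : ℕ) : Prop := (x, y) ∈ G.rel
/-- `x:A•`, i.e. `x:A` occurs on the left of `G`. -/
def Black (G : LSeq) (x : ℕ) (A : Formula) : Prop := (x, A) ∈ G.left
/-- `x:A∘`, i.e. `x:A` occurs on the right of `G`. -/
def White (G : LSeq) (x : ℕ) (A : Formula) : Prop := (x, A) ∈ G.right

/-- The set of labels occurring in `G`. -/
def labels (G : LSeq) : Set ℕ :=
  {x | (∃ y, G.Le x y ∨ G.Le y x ∨ G.Rel x y ∨ G.Rel y x) ∨ ∃ A, G.Black x A ∨ G.White x A}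

/-- `G` is a finite labelled sequent. -/
def FiniteSeq (G : LSeq) : Prop :=
  G.le.Finite ∧ G.rel.Finite ∧ G.left.Finite ∧ G.right.Finite

/-- Add labelled formulas to the left of a sequent. -/
def addLeft (G : LSeq) (s : Set (ℕ × Formula)) : LSeq := { G with left := G.left ∪ s }
/-- Add labelled formulas to the right of a sequent. -/
def addRight (G : LSeq) (s : Set (ℕ × Formula)) : LSeq := { G with right := G.right ∪ s }

/-- Happiness for a left (`•`) occurrence of a formula at label `x` in `G` (Def. 5.3). -/
def BlackHappy (G : LSeq) (x : ℕ) : Formula → Prop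
  | Formula.bot => False
  | Formula.atom _ => True
  | Formula.and A B => G.Black x A ∧ G.Black x B
  | Formula.or A B => G.Black x A ∨ G.Black x B
  | Formula.imp A B => G.White x A ∨ G.Black x B
  | Formula.box A => ∀ z, G.Rel x z → G.Black z A ∧ G.Black z (Formula.box A)
  | Formula.dia A => ∃ y, G.Rel x y ∧ G.Black y A

/-- Happiness for a right (`∘`) occurrence of a formula at label `x` in `G` (Def. 5.3). -/
def WhiteHappy (G : LSeq) (x : ℕ) : Formula → Prop
  | Formula.bot => True
  | Formula.atom a => ¬ G.Black x (Formula.atom a)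
  | Formula.and A B => G.White x A ∨ G.White x B
  | Formula.or A B => G.White x A ∧ G.White x B
  | Formula.imp A B => ∃ y, G.Le x y ∧ G.Black y A ∧ G.White y B
  | Formula.box A => ∃ y z, G.Le x y ∧ G.Rel y z ∧ G.White z A
  | Formula.dia A => ∀ y, G.Rel x y → G.White y A ∧ G.White y (Formula.dia A)

/-- A label is happy iff all formulas occurring at it are happy. -/
def HappyLabel (G : LSeq) (x : ℕ) : Prop :=
  (∀ A, G.Black x A → G.BlackHappy x A) ∧ (∀ A, G.White x A → G.WhiteHappy x A)

/-- The left exceptions for almost happy labels: formulas of the shape `⊥•`. -/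
def AlmostExceptB : Formula → Prop
  | Formula.bot => True
  | _ => False

/-- The left exceptions for naively happy labels: shapes `⊥•` and `(◇A)•`. -/
def NaiveExceptB : Formula → Prop
  | Formula.bot => True
  | Formula.dia _ => True
  | _ => False

/-- The right exceptions for almost/naively happy labels:
shapes `a∘`, `(A⊃B)∘` and `(□A)∘`. -/
def ExceptW : Formula → Prop
  | Formula.atom _ => True
  | Formula.imp _ _ => True
  | Formula.box _ => True
  | _ => False

/-- A label is almost happy iff all formulas occurring at it are happy,
except possibly those of the shapes `⊥•`, `a∘`, `(A⊃B)∘`, `(□A)∘`. -/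
def AlmostHappyLabel (G : LSeq) (x : ℕ) : Prop :=
  (∀ A, G.Black x A → ¬ AlmostExceptB A → G.BlackHappy x A) ∧
  (∀ A, G.White x A → ¬ ExceptW A → G.WhiteHappy x A)

/-- A label is naively happy iff all formulas occurring at it are happy,
except possibly those of the shapes `⊥•`, `(◇A)•`, `a∘`, `(A⊃B)∘`, `(□A)∘`. -/
def NaivelyHappyLabel (G : LSeq) (x : ℕ) : Prop :=
  (∀ A, G.Black x A → ¬ NaiveExceptB A → G.BlackHappy x A) ∧
  (∀ A, G.White x A → ¬ ExceptW A → G.WhiteHappy x A)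

/-- `G` is structurally saturated (Def. 5.5): closure under monotonicity (monL),
the frame conditions (F1) and (F2), and transitivity and reflexivity (on the
labels of `G`) of both `≤_G` and `R_G`. -/
def StructSat (G : LSeq) : Prop :=
  (∀ x y A, G.Le x y → G.Black x A → G.Black y A) ∧
  (∀ x y z, G.Rel x y → G.Le y z → ∃ u, G.Le x u ∧ G.Rel u z) ∧
  (∀ x y z, G.Rel x y → G.Le x z → ∃ u, G.Le y u ∧ G.Rel z u) ∧
  (∀ x y z, G.Le x y → G.Le y z → G.Le x z) ∧
  (∀ x ∈ G.labels, G.Le x x) ∧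
  (∀ x y z, G.Rel x y → G.Rel y z → G.Rel x z) ∧
  (∀ x ∈ G.labels, G.Rel x x)

/-- `G` is happy iff it is structurally saturated and all its labels are happy. -/
def Happy (G : LSeq) : Prop := G.StructSat ∧ ∀ x ∈ G.labels, G.HappyLabel x

/-- `G` is axiomatic iff some label carries `x:a•` and `x:a∘`, or carries `x:⊥•`. -/
def Axiomatic (G : LSeq) : Prop :=
  ∃ x, (∃ a, G.Black x (Formula.atom a) ∧ G.White x (Formula.atom a)) ∨
       G.Black x Formula.bot

/-- The reflexive-transitive closure of `R_G ∪ R_G⁻¹`: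
its equivalence classes are the layers of `G`. -/
def LayerRel (G : LSeq) : ℕ → ℕ → Prop :=
  Relation.ReflTransGen (fun x y => G.Rel x y ∨ G.Rel y x)

/-- The layer of a label. -/
def layerOf (G : LSeq) (x : ℕ) : Set ℕ := {y | G.LayerRel x y}

/-- `L` is a layer of `G`: an equivalence class of `LayerRel`. -/
def IsLayer (G : LSeq) (L : Set ℕ) : Prop := ∃ x ∈ G.labels, L = G.layerOf x

/-- `G` is layered (Def. 6.2). -/
def Layered (G : LSeq) : Prop :=
  (∀ x y, G.Rel x y → x ≠ y → ¬ G.Le x y ∧ ¬ G.Le y x) ∧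
  (∀ x x' y y', G.Rel x y → G.Rel x' y' → G.Le x x' → x ≠ x' → ¬ G.Le y' y)

/-- The order on layers: `L1 ≤ L2` iff `x ≤_G y` for some `x ∈ L1`, `y ∈ L2`. -/
def LayerLE (G : LSeq) (L1 L2 : Set ℕ) : Prop := ∃ x ∈ L1, ∃ y ∈ L2, G.Le x y

/-- Strict order on layers. -/
def LayerLT (G : LSeq) (L1 L2 : Set ℕ) : Prop := G.LayerLE L1 L2 ∧ L1 ≠ L2

/-- `G` is tree-layered: it is layered, there is a ≤-least layer, and any two
layers below a common layer are ≤-comparable. -/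
def TreeLayered (G : LSeq) : Prop :=
  G.Layered ∧
  (∃ L0, G.IsLayer L0 ∧ ∀ L, G.IsLayer L → G.LayerLE L0 L) ∧
  (∀ L L' L'', G.IsLayer L → G.IsLayer L' → G.IsLayer L'' →
    G.LayerLE L' L → G.LayerLE L'' L → G.LayerLE L' L'' ∨ G.LayerLE L'' L')

/-- `L` is a topmost (≤-maximal) layer of `G`. -/
def Topmost (G : LSeq) (L : Set ℕ) : Prop :=
  G.IsLayer L ∧ ∀ L', G.IsLayer L' → G.LayerLE L L' → L' = L

/-- The cluster of a label: its equivalence class under `R_G ∩ R_G⁻¹`. -/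
def clusterOf (G : LSeq) (x : ℕ) : Set ℕ := {y | G.Rel x y ∧ G.Rel y x}

/-- `C` is a cluster of `G`. -/
def IsCluster (G : LSeq) (C : Set ℕ) : Prop := ∃ x ∈ G.labels, C = G.clusterOf x

/-- The relation `R_G` on clusters: `C1 R_G C2` iff `x R_G y`
for some `x ∈ C1`, `y ∈ C2`. -/
def ClRel (G : LSeq) (C1 C2 : Set ℕ) : Prop := ∃ x ∈ C1, ∃ y ∈ C2, G.Rel x y

/-- The relation `≤_G` on clusters: `C1 ≤_G C2` iff every `y ∈ C2` has some
`x ∈ C1` with `x ≤_G y`. -/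
def ClLe (G : LSeq) (C1 C2 : Set ℕ) : Prop := ∀ y ∈ C2, ∃ x ∈ C1, G.Le x y

/-- `G` is tree-clustered: it is structurally saturated, some cluster is
`R_G`-below every cluster, and any two clusters below a common cluster are
`R_G`-comparable. -/
def TreeClustered (G : LSeq) : Prop :=
  G.StructSat ∧
  (∀ C' C'', G.IsCluster C' → G.IsCluster C'' →
    ∃ C, G.IsCluster C ∧ G.ClRel C C' ∧ G.ClRel C C'') ∧
  (∀ C C' C'', G.IsCluster C → G.IsCluster C' → G.IsCluster C'' →
    G.ClRel C' C → G.ClRel C'' C → G.ClRel C' C'' ∨ G.ClRel C'' C')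

/-- `G` is stable: tree-layered, tree-clustered, and all inner (non-topmost)
layers are happy. -/
def Stable (G : LSeq) : Prop :=
  G.TreeLayered ∧ G.TreeClustered ∧
  ∀ L, G.IsLayer L → ¬ G.Topmost L → ∀ x ∈ L, G.HappyLabel x

/-- `G` is semi-saturated: stable with all topmost layers naively happy. -/
def SemiSaturated (G : LSeq) : Prop :=
  G.Stable ∧ ∀ L, G.Topmost L → ∀ x ∈ L, G.NaivelyHappyLabel x

/-- `G` is saturated: stable with all topmost layers almost happy. -/
def Saturated (G : LSeq) : Prop :=
  G.Stable ∧ ∀ L, G.Topmost L → ∀ x ∈ L, G.AlmostHappyLabel x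

/-- Labels `x` (in `G`) and `y` (in `H`) are equivalent (`x ∼ y`) iff they carry
exactly the same left formulas and the same right formulas. -/
def LabEquiv (G : LSeq) (x : ℕ) (H : LSeq) (y : ℕ) : Prop :=
  (∀ A, G.Black x A ↔ H.Black y A) ∧ (∀ A, G.White x A ↔ H.White y A)

/-- A label has no past iff `y ≤_G x` implies `y = x`. -/
def NoPast (G : LSeq) (x : ℕ) : Prop := ∀ y, G.Le y x → y = x

end LSeq

/-- A stable set of sequents: finite with all elements stable. -/
def StableSet (S : Set LSeq) : Prop := S.Finite ∧ ∀ G ∈ S, G.Stable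
/-- A semi-saturated set of sequents: finite with all elements semi-saturated. -/
def SemiSaturatedSet (S : Set LSeq) : Prop := S.Finite ∧ ∀ G ∈ S, G.SemiSaturated
/-- A saturated set of sequents: finite with all elements saturated. -/
def SaturatedSet (S : Set LSeq) : Prop := S.Finite ∧ ∀ G ∈ S, G.Saturated

/-- The forcing relation over raw Kripke data on a type of worlds `W`. -/
def Force {W : Type} (le rel : W → W → Prop) (V : W → ℕ → Prop) : W → Formula → Prop
  | _, Formula.bot => False
  | w, Formula.atom a => V w a
  | w, Formula.and A B => Force le rel V w A ∧ Force le rel V w B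
  | w, Formula.or A B => Force le rel V w A ∨ Force le rel V w B
  | w, Formula.imp A B => ∀ w', le w w' → Force le rel V w' A → Force le rel V w' B
  | w, Formula.box A => ∀ w' u, le w w' → rel w' u → Force le rel V u A
  | w, Formula.dia A => ∃ u, rel w u ∧ Force le rel V u A

/-- **Countermodel from a happy sequent.** For every happy
sequent `G`, the model `M(G)` whose worlds are the labels of `G`, with the
relations `≤_G` and `R_G` and the valuation `a ∈ V(w)` iff `w:a•`, is a
birelational model (both relations are preorders, the frame conditions (F1) and
(F2) hold, and the valuation is monotone) in which `R_G` is reflexive and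
transitive, and it satisfies: if `x:A` occurs on the left of `G` then
`M(G), x ⊩ A`, and if `x:A` occurs on the right of `G` then `M(G), x ⊮ A`. -/
theorem model_of_happy_sequent (G : LSeq) (hG : G.Happy) :
    let W := {x : ℕ // x ∈ G.labels}
    let le' : W → W → Prop := fun a b => G.Le a.1 b.1
    let rel' : W → W → Prop := fun a b => G.Rel a.1 b.1
    let V : W → ℕ → Prop := fun a n => G.Black a.1 (Formula.atom n)
    (∀ a : W, le' a a) ∧
    (∀ a b c : W, le' a b → le' b c → le' a c) ∧
    (∀ a : W, rel' a a) ∧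
    (∀ a b c : W, rel' a b → rel' b c → rel' a c) ∧
    (∀ a b c : W, rel' a b → le' b c → ∃ u : W, le' a u ∧ rel' u c) ∧
    (∀ a b c : W, le' a c → rel' a b → ∃ u : W, rel' c u ∧ le' b u) ∧
    (∀ a b : W, le' a b → ∀ n, V a n → V b n) ∧
    (∀ (x : W) (A : Formula), G.Black x.1 A → Force le' rel' V x A) ∧
    (∀ (x : W) (A : Formula), G.White x.1 A → ¬ Force le' rel' V x A) := by
  intro W le' rel' V
  obtain ⟨⟨mon, f1, f2, letrans, lerefl, reltrans, relrefl⟩, hap⟩ := hG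
  have memB : ∀ x A, G.Black x A → x ∈ G.labels :=
    fun x A h => Or.inr ⟨A, Or.inl h⟩
  have memW : ∀ x A, G.White x A → x ∈ G.labels :=
    fun x A h => Or.inr ⟨A, Or.inr h⟩
  have memLe2 : ∀ x y, G.Le x y → y ∈ G.labels :=
    fun x y h => Or.inl ⟨x, Or.inr (Or.inl h)⟩
  have memRel2 : ∀ x y, G.Rel x y → y ∈ G.labels :=
    fun x y h => Or.inl ⟨x, Or.inr (Or.inr (Or.inr h))⟩
  have main : ∀ A : Formula, (∀ x : W, G.Black x.1 A → Force le' rel' V x A) ∧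
      (∀ x : W, G.White x.1 A → ¬ Force le' rel' V x A) := by
    intro A
    induction A with
    | bot =>
      constructor
      · intro x hB
        exact absurd ((hap x.1 (memB _ _ hB)).1 _ hB) (by simp [LSeq.BlackHappy])
      · intro x _ hF; exact hF
    | atom a =>
      constructor
      · intro x hB; exact hB
      · intro x hWt hF
        exact (hap x.1 (memW _ _ hWt)).2 _ hWt hF
    | and A B ihA ihB =>
      constructor
      · intro x hB
        have h := (hap x.1 (memB _ _ hB)).1 _ hB
        exact ⟨ihA.1 x h.1, ihB.1 x h.2⟩
      · intro x hWt hF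
        rcases (hap x.1 (memW _ _ hWt)).2 _ hWt with h | h
        · exact ihA.2 x h hF.1
        · exact ihB.2 x h hF.2
    | or A B ihA ihB =>
      constructor
      · intro x hB
        rcases (hap x.1 (memB _ _ hB)).1 _ hB with h | h
        · exact Or.inl (ihA.1 x h)
        · exact Or.inr (ihB.1 x h)
      · intro x hWt hF
        have h := (hap x.1 (memW _ _ hWt)).2 _ hWt
        rcases hF with hF | hF
        · exact ihA.2 x h.1 hF
        · exact ihB.2 x h.2 hF
    | imp A B ihA ihB =>
      constructor
      · intro x hB
        intro w' hle hFA
        have hB' : G.Black w'.1 (Formula.imp A B) := mon _ _ _ hle hB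
        rcases (hap w'.1 (memB _ _ hB')).1 _ hB' with h | h
        · exact absurd hFA (ihA.2 w' h)
        · exact ihB.1 w' h
      · intro x hWt hF
        obtain ⟨y, hxy, hBA, hWB⟩ := (hap x.1 (memW _ _ hWt)).2 _ hWt
        have hy : y ∈ G.labels := memLe2 _ _ hxy
        exact ihB.2 ⟨y, hy⟩ hWB (hF ⟨y, hy⟩ hxy (ihA.1 ⟨y, hy⟩ hBA))
    | box A ihA =>
      constructor
      · intro x hB
        intro w' u hle hrel
        have hB' : G.Black w'.1 (Formula.box A) := mon _ _ _ hle hB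
        exact ihA.1 u ((hap w'.1 (memB _ _ hB')).1 _ hB' u.1 hrel).1
      · intro x hWt hF
        obtain ⟨y, z, hxy, hyz, hWA⟩ := (hap x.1 (memW _ _ hWt)).2 _ hWt
        have hy : y ∈ G.labels := memLe2 _ _ hxy
        have hz : z ∈ G.labels := memRel2 _ _ hyz
        exact ihA.2 ⟨z, hz⟩ hWA (hF ⟨y, hy⟩ ⟨z, hz⟩ hxy hyz)
    | dia A ihA =>
      constructor
      · intro x hB
        obtain ⟨y, hxy, hBA⟩ := (hap x.1 (memB _ _ hB)).1 _ hB
        have hy : y ∈ G.labels := memRel2 _ _ hxy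
        exact ⟨⟨y, hy⟩, hxy, ihA.1 ⟨y, hy⟩ hBA⟩
      · intro x hWt hF
        obtain ⟨u, hxu, hFA⟩ := hF
        exact ihA.2 u ((hap x.1 (memW _ _ hWt)).2 _ hWt u.1 hxu).1 hFA
  refine ⟨fun a => lerefl a.1 a.2, fun a b c => letrans a.1 b.1 c.1,
    fun a => relrefl a.1 a.2, fun a b c => reltrans a.1 b.1 c.1,
    ?_, ?_, fun a b hab n hn => mon _ _ _ hab hn,
    fun x A => (main A).1 x, fun x A => (main A).2 x⟩
  · intro a b c hab hbc
    obtain ⟨u, hu1, hu2⟩ := f1 a.1 b.1 c.1 hab hbc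
    exact ⟨⟨u, memLe2 _ _ hu1⟩, hu1, hu2⟩
  · intro a b c hac hab
    obtain ⟨u, hu1, hu2⟩ := f2 a.1 b.1 c.1 hab hac
    exact ⟨⟨u, memRel2 _ _ hu2⟩, hu2, hu1⟩
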